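/- Let K be a field of characteristic different from 2, let D ∈ K[X] have even degree 2d with d ≥ 1 and leading coefficient a square in K, and let δ ∈ K((T)) satisfy δ² = ι D. Let A ∈ K[X] be the polynomial part of δ, i.e. the unique polynomial with orderTop(δ − ι A) > 0. Let t, s ∈ K[X] with s ≠ 0, and set α = (ι(A + t) + δ)·(ι s)⁻¹ and α* = (ι(A + t) − δ)·(ι s)⁻¹. Then (orderTop α* > 0 and orderTop α < 0) holds if and only if (deg t < deg s and deg s < d). Moreover, in that case orderTop α = deg s − d. -/

import Mathlib

/-!
Write `v` for `orderTop` and `ε = δ - ι A`, so `v ε > 0`. From `δ² = ι D` we get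
`v δ = -d`, and since `ι A + δ = 2δ - ε` with `2` a unit, also `v (ι A + δ) = -d`.
The numerators of `α*` and `α` are `ι t - ε` and `ι t + (ι A + δ)`, and dividing by `ι s`
subtracts `v (ι s) = -deg s`. As `v (ι s) ≤ 0 < v ε`, the ultrametric inequality gives
`v α* > 0 ↔ v (ι t) > v (ι s)`, i.e. `deg t < deg s`; granted that, `ι t` is negligible
in `α`, so `v α < 0 ↔ -d < -deg s`, and then `v α = deg s - d`.
-/

open Polynomial

/-- The ring homomorphism `K[X] → K((T))` sending `X` to `T⁻¹`. -/
noncomputable def iota {K : Type*} [Field K] : Polynomial K →+* LaurentSeries K :=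
  Polynomial.eval₂RingHom (HahnSeries.C : K →+* LaurentSeries K)
    (HahnSeries.single (-1 : ℤ) (1 : K))

namespace HahnSeries

section Threshold

variable {Γ R : Type*} [LinearOrder Γ] [AddGroup R] {x y : HahnSeries Γ R} {a : WithTop Γ}

theorem lt_orderTop_sub_iff_of_lt (hy : a < y.orderTop) :
    a < (x - y).orderTop ↔ a < x.orderTop := by
  refine ⟨fun h => ?_, fun h => (lt_min h hy).trans_le min_orderTop_le_orderTop_sub⟩
  have hx : x = (x - y) + y := (sub_add_cancel x y).symm
  exact hx ▸ (lt_min h hy).trans_le min_orderTop_le_orderTop_add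

theorem orderTop_add_lt_iff_of_le (hx : a ≤ x.orderTop) :
    (x + y).orderTop < a ↔ y.orderTop < a := by
  refine ⟨fun h => ?_, fun h => orderTop_add_eq_right (h.trans_le hx) ▸ h⟩
  by_contra! hy
  exact (le_min hx hy).trans min_orderTop_le_orderTop_add |>.not_gt h

end Threshold

section Field

variable {Γ K : Type*} [AddCommGroup Γ] [LinearOrder Γ] [IsOrderedAddMonoid Γ] [Field K]
  {x y : HahnSeries Γ K}

theorem orderTop_div (x y : HahnSeries Γ K) : (x / y).orderTop = x.orderTop - y.orderTop := by
  simpa only [addVal_apply] using (addVal Γ K).map_div (x := x) (y := y)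

theorem orderTop_div_pos_iff (hy : y ≠ 0) : 0 < (x / y).orderTop ↔ y.orderTop < x.orderTop := by
  rw [orderTop_div, LinearOrderedAddCommGroupWithTop.sub_pos, or_iff_left (orderTop_ne_top.2 hy)]

theorem orderTop_div_neg_iff (hy : y ≠ 0) : (x / y).orderTop < 0 ↔ x.orderTop < y.orderTop := by
  have hy' := orderTop_ne_top.2 hy
  have h := LinearOrderedAddCommGroupWithTop.sub_lt_sub_iff_left_of_ne_top hy'
    (b := x.orderTop) (c := y.orderTop)
  rwa [LinearOrderedAddCommGroupWithTop.sub_self_eq_zero_iff_ne_top.2 hy', ← orderTop_div] at h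

/-- `y + x = 2 • x - (x - y)`, and `2 • x` has the order of `x`. -/
theorem orderTop_add_eq_of_lt_orderTop_sub (h2 : (2 : K) ≠ 0)
    (h : x.orderTop < (x - y).orderTop) : (y + x).orderTop = x.orderTop := by
  have h2x : (C (2 : K) * x).orderTop = x.orderTop := by
    rw [orderTop_mul, C_apply, orderTop_single h2, WithTop.coe_zero, zero_add]
  have hsum : y + x = C (2 : K) * x - (x - y) := by
    rw [C_mul_eq_smul, two_smul]; abel
  rw [hsum, orderTop_sub (h2x ▸ h), h2x]

end Field

end HahnSeries

theorem LaurentSeries.orderTop_eq_of_orderTop_sq {R : Type*} [Ring R] [NoZeroDivisors R]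
    {x : LaurentSeries R} {m : ℤ} (h : (x ^ 2).orderTop = (2 * m : ℤ)) : x.orderTop = m := by
  rw [pow_two, HahnSeries.orderTop_mul] at h
  cases hx : x.orderTop with
  | top => rw [hx, top_add] at h; exact absurd h WithTop.top_ne_coe
  | coe k =>
    rw [hx, ← WithTop.coe_add, WithTop.coe_inj] at h
    rw [WithTop.coe_inj]
    omega

section Iota

variable {K : Type*} [Field K]

open HahnSeries

theorem iota_monomial (n : ℕ) (a : K) : iota (monomial n a) = single (-(n : ℤ)) a := by
  rw [iota, coe_eval₂RingHom, eval₂_monomial, single_pow, one_pow, C_apply, single_mul_single,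
    zero_add, mul_one, nsmul_eq_mul, mul_neg_one]

theorem iota_eq_sum (f : K[X]) :
    iota f = ∑ i ∈ f.support, single (-(i : ℤ)) (f.coeff i) := by
  conv_lhs => rw [f.as_sum_support]
  simp only [map_sum, iota_monomial]

theorem orderTop_iota {f : K[X]} (hf : f ≠ 0) :
    (iota f).orderTop = (-(f.natDegree : ℤ) : ℤ) := by
  refine le_antisymm (orderTop_le_of_coeff_ne_zero ?_) (le_orderTop_iff_forall.2 fun j hj => ?_)
  · rw [iota_eq_sum, HahnSeries.coeff_sum, Finset.sum_eq_single f.natDegree]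
    · simpa using hf
    · intro i _ hi
      exact coeff_single_of_ne (by omega)
    · simp
  · rw [iota_eq_sum, HahnSeries.coeff_sum]
    refine Finset.sum_eq_zero fun i hi => coeff_single_of_ne ?_
    have := le_natDegree_of_mem_supp i hi
    have := WithTop.coe_lt_coe.1 hj
    omega

theorem orderTop_iota_nonpos {f : K[X]} (hf : f ≠ 0) : (iota f).orderTop ≤ 0 := by
  rw [orderTop_iota hf]
  exact_mod_cast (by omega : -(f.natDegree : ℤ) ≤ 0)

theorem iota_ne_zero {f : K[X]} (hf : f ≠ 0) : iota f ≠ 0 :=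
  orderTop_ne_top.1 (by rw [orderTop_iota hf]; exact WithTop.coe_ne_top)

theorem orderTop_iota_lt_orderTop_iota_iff {s t : K[X]} :
    (iota s).orderTop < (iota t).orderTop ↔ t.degree < s.degree := by
  rcases eq_or_ne s 0 with rfl | hs
  · simp
  rcases eq_or_ne t 0 with rfl | ht
  · simp only [map_zero, orderTop_zero, degree_zero, orderTop_iota hs, WithTop.coe_lt_top,
      true_iff]
    exact bot_lt_iff_ne_bot.2 (degree_ne_bot.2 hs)
  rw [orderTop_iota hs, orderTop_iota ht, WithTop.coe_lt_coe, neg_lt_neg_iff, Nat.cast_lt,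
    natDegree_lt_natDegree_iff ht]

theorem orderTop_eq_of_sq_eq_iota {D : K[X]} {d : ℕ} (hdeg : D.degree = (2 * d : ℕ))
    {δ : LaurentSeries K} (hδ : δ ^ 2 = iota D) : δ.orderTop = (-(d : ℤ) : ℤ) := by
  have hD : D ≠ 0 := fun h => by rw [h, degree_zero] at hdeg; exact WithBot.bot_ne_coe hdeg
  refine LaurentSeries.orderTop_eq_of_orderTop_sq ?_
  rw [hδ, orderTop_iota hD, natDegree_eq_of_degree_eq_some hdeg, WithTop.coe_inj]
  push_cast
  ring

end Iota

open HahnSeries in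
theorem sigma_reduced_degree_criterion_general {K : Type*} [Field K] (h2 : (2 : K) ≠ 0)
    (D : Polynomial K) (d : ℕ) (hdeg : D.degree = (2 * d : ℕ))
    (δ : LaurentSeries K) (hδ : δ ^ 2 = iota D)
    (A : Polynomial K) (hA : 0 < (δ - iota A).orderTop)
    (t s : Polynomial K) (hs : s ≠ 0) :
    ((0 < ((iota (A + t) - δ) * (iota s)⁻¹).orderTop ∧
        ((iota (A + t) + δ) * (iota s)⁻¹).orderTop < 0) ↔
      (t.degree < s.degree ∧ s.natDegree < d)) ∧
    (t.degree < s.degree → s.natDegree < d →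
      ((iota (A + t) + δ) * (iota s)⁻¹).orderTop = (((s.natDegree : ℤ) - d : ℤ) : WithTop ℤ)) := by
  have hδd := orderTop_eq_of_sq_eq_iota hdeg hδ
  have hιs := orderTop_iota hs
  have hs_lt_ε : (iota s).orderTop < (δ - iota A).orderTop :=
    (orderTop_iota_nonpos hs).trans_lt hA
  have hδ_nonpos : δ.orderTop ≤ 0 := hδd ▸ by exact_mod_cast (by omega : -(d : ℤ) ≤ 0)
  have hw : (iota A + δ).orderTop = (-(d : ℤ) : ℤ) :=
    (orderTop_add_eq_of_lt_orderTop_sub h2 (hδ_nonpos.trans_lt hA)).trans hδd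
  have hconj : iota (A + t) - δ = iota t - (δ - iota A) := by rw [map_add]; ring
  have hnum : iota (A + t) + δ = iota t + (iota A + δ) := by rw [map_add]; ring
  simp only [← div_eq_mul_inv]
  have hα_conj : 0 < ((iota (A + t) - δ) / iota s).orderTop ↔ t.degree < s.degree := by
    rw [orderTop_div_pos_iff (iota_ne_zero hs), hconj, lt_orderTop_sub_iff_of_lt hs_lt_ε,
      orderTop_iota_lt_orderTop_iota_iff]
  have hα (hts : t.degree < s.degree) :
      ((iota (A + t) + δ) / iota s).orderTop < 0 ↔ s.natDegree < d := by
    rw [orderTop_div_neg_iff (iota_ne_zero hs), hnum,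
      orderTop_add_lt_iff_of_le (orderTop_iota_lt_orderTop_iota_iff.2 hts).le, hw, hιs,
      WithTop.coe_lt_coe]
    omega
  refine ⟨⟨fun ⟨hconj_pos, hα_neg⟩ => ?_, fun ⟨hts, hsd⟩ => ⟨hα_conj.2 hts, (hα hts).2 hsd⟩⟩,
    fun hts hsd => ?_⟩
  · have hts := hα_conj.1 hconj_pos
    exact ⟨hts, (hα hts).1 hα_neg⟩
  have hw_lt : (iota A + δ).orderTop < (iota t).orderTop :=
    lt_trans (hw ▸ hιs ▸ (by exact_mod_cast (by omega : -(d : ℤ) < -(s.natDegree : ℤ))))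
      (orderTop_iota_lt_orderTop_iota_iff.2 hts)
  rw [orderTop_div, hnum, orderTop_add_eq_right hw_lt, hw, hιs]
  exact_mod_cast congrArg WithTop.some
    (by ring : -(d : ℤ) - -(s.natDegree : ℤ) = s.natDegree - d)

/-- `α = (ι(A + t) + δ)/ι s` is σ-reduced (i.e. `orderTop α* > 0 > orderTop α`, where `α*` is
the conjugate) iff `deg t < deg s < d`; in that case `orderTop α = deg s - d`. -/
theorem sigma_reduced_degree_criterion {K : Type*} [Field K] (h2 : (2 : K) ≠ 0)
    (D : Polynomial K) (d : ℕ) (hd : 1 ≤ d) (hdeg : D.degree = (2 * d : ℕ))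
    (hlc : ∃ c : K, D.leadingCoeff = c ^ 2)
    (δ : LaurentSeries K) (hδ : δ ^ 2 = iota D)
    (A : Polynomial K) (hA : 0 < (δ - iota A).orderTop)
    (t s : Polynomial K) (hs : s ≠ 0) :
    ((0 < ((iota (A + t) - δ) * (iota s)⁻¹).orderTop ∧
        ((iota (A + t) + δ) * (iota s)⁻¹).orderTop < 0) ↔
      (t.degree < s.degree ∧ s.natDegree < d)) ∧
    (t.degree < s.degree → s.natDegree < d →
      ((iota (A + t) + δ) * (iota s)⁻¹).orderTop = (((s.natDegree : ℤ) - d : ℤ) : WithTop ℤ)) :=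
  sigma_reduced_degree_criterion_general h2 D d hdeg δ hδ A hA t s hs
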